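/- Let k ≥ 3 and 2k-1 < n < 3k-2, and set V_n^(k) = W_{n-2k}^(k) W_{n-2k-1}^(k) ... W_0^(k). Then W_{n-2k+1}^(k) = V_n^(k) (n-2k+1) and W_{n-2k+2}^(k) = W_{n-2k+1}^(k) V_n^(k) (n-2k+2), where the trailing terms are single digits. -/

import Mathlib

def kbon (k : ℕ) (n : ℕ) : ℕ :=
  if _h1 : n < k - 1 then 0
  else if _h2 : n = k - 1 then 1
  else ∑ i ∈ Finset.range k, kbon k (n - i - 1)
termination_by n
decreasing_by omega

/-- The k-bonacci morphism on words over ℕ. -/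
def phiW (k : ℕ) (w : List ℕ) : List ℕ :=
  w.flatMap (fun a => if a % k = k - 1 then [a + 1] else [k * (a / k), a + 1])

/-- The finite k-bonacci word over the infinite alphabet ℕ. -/
def W (k n : ℕ) : List ℕ := (phiW k)^[n] [0]

/-! Below the level `k - 1` no letter is congruent to `k - 1` modulo `k`, so `φ_k` acts on such
letters as `a ↦ 0 (a + 1)`. Hence, by induction on `j < k`, `W_j = W_{j-1} ⋯ W_0 j`: applying `φ_k`
shifts every factor `W_i` to `W_{i+1}` and turns the final letter `j` into `W_0 (j + 1)`.
The theorem is this for `j = n - 2k + 1` and for `j = n - 2k + 2`, the latter with its first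
factor `W_{n-2k+1}` split off. -/

lemma phiW_append (k : ℕ) (u v : List ℕ) : phiW k (u ++ v) = phiW k u ++ phiW k v :=
  List.flatMap_append

lemma phiW_singleton_of_lt {k a : ℕ} (ha : a + 1 < k) : phiW k [a] = [0, a + 1] := by
  have ha' : a < k := by omega
  simp [phiW, Nat.mod_eq_of_lt ha', Nat.div_eq_of_lt ha', show a ≠ k - 1 by omega]

lemma W_zero (k : ℕ) : W k 0 = [0] := rfl

lemma W_succ (k j : ℕ) : W k (j + 1) = phiW k (W k j) :=
  Function.iterate_succ_apply' _ _ _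

lemma phiW_flatten_map_W (k : ℕ) (l : List ℕ) :
    phiW k (l.map (W k)).flatten = (l.map fun i => W k (i + 1)).flatten := by
  induction l with
  | nil => rfl
  | cons i l ih => simp only [List.map_cons, List.flatten_cons, phiW_append, ih, W_succ]

lemma flatten_map_reverse_range_succ {α : Type*} (f : ℕ → List α) (j : ℕ) :
    ((List.range (j + 1)).reverse.map f).flatten = f j ++ ((List.range j).reverse.map f).flatten := by
  simp [List.range_succ]

lemma W_eq_flatten_append_of_lt {k j : ℕ} (hj : j < k) :
    W k j = ((List.range j).reverse.map (W k)).flatten ++ [j] := by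
  induction j with
  | zero => rfl
  | succ j ih =>
    have hshift : (List.range (j + 1)).reverse = ((List.range j).reverse.map (· + 1)) ++ [0] := by
      rw [List.range_succ_eq_map, List.reverse_cons, List.map_reverse]
    rw [W_succ, ih (by omega), phiW_append, phiW_flatten_map_W, phiW_singleton_of_lt hj, hshift]
    simp [Function.comp_def, W_zero]

theorem V_prefix_structure_general (k n : ℕ) (h1 : 2 * k - 1 < n) (h2 : n < 3 * k - 2) :
    W k (n - 2 * k + 1) = (((List.range (n + 1 - 2 * k)).reverse).map (W k)).flatten ++ [n - 2 * k + 1] ∧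
    W k (n - 2 * k + 2) = W k (n - 2 * k + 1) ++
      (((List.range (n + 1 - 2 * k)).reverse).map (W k)).flatten ++ [n - 2 * k + 2] := by
  rw [show n + 1 - 2 * k = n - 2 * k + 1 by omega]
  refine ⟨W_eq_flatten_append_of_lt (by omega), ?_⟩
  rw [W_eq_flatten_append_of_lt (j := n - 2 * k + 2) (by omega), flatten_map_reverse_range_succ,
    List.append_assoc]

theorem V_prefix_structure (k n : ℕ) (hk : 3 ≤ k) (h1 : 2 * k - 1 < n) (h2 : n < 3 * k - 2) :
    W k (n - 2 * k + 1) = (((List.range (n + 1 - 2 * k)).reverse).map (W k)).flatten ++ [n - 2 * k + 1] ∧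
    W k (n - 2 * k + 2) = W k (n - 2 * k + 1) ++
      (((List.range (n + 1 - 2 * k)).reverse).map (W k)).flatten ++ [n - 2 * k + 2] :=
  V_prefix_structure_general k n h1 h2
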